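/- arXiv:1911.03542 — 8 statements merged into one kernel-verified Lean document; each statement's English description precedes it below -/
import Mathlib

section
/- Let S be a string of length n over an alphabet with a sentinel, and define pss(j) = max{k ∈ [0,j) : S_k ≺ S_j} where S_0 is the sentinel suffix smaller than all others. If pss(j) = i > 0, then the substring S[i..j) is a Lyndon word. -/
variable {α : Type*} [LinearOrder α]

/-- A Lyndon word: nonempty and strictly smaller than all of its proper nonempty suffixes. -/
def IsLyndon (s : List α) : Prop :=
  s ≠ [] ∧ ∀ i, 0 < i → i < s.length → List.Lex (· < ·) s (s.drop i)

/-- The `i`-th suffix of `S` (1-indexed); `sfx S 0 = []` plays the role of the sentinel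
suffix `S₀ = $`, and `sfx S (n+1) = []` plays the role of `S_{n+1} = $`
(the empty list is lexicographically smaller than every nonempty list). -/
def sfx (S : List α) (i : ℕ) : List α := if i = 0 then [] else S.drop (i - 1)

open scoped Classical in
/-- `pss S j = max {k ∈ [0,j) : S_k ≺ S_j}`. -/
noncomputable def pss (S : List α) (j : ℕ) : ℕ :=
  Nat.findGreatest (fun k => List.Lex (· < ·) (sfx S k) (sfx S j)) (j - 1)

/-- `nss S i = min {j ∈ (i, n+1] : S_j ≺ S_i}`. -/
noncomputable def nss (S : List α) (i : ℕ) : ℕ :=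
  sInf {j | i < j ∧ j ≤ S.length + 1 ∧ List.Lex (· < ·) (sfx S j) (sfx S i)}

/-- Length of the longest common prefix of two lists. -/
def lcp : List α → List α → ℕ
  | a :: s, b :: t => if a = b then lcp s t + 1 else 0
  | _, _ => 0

/-- The PSS closure: all iterates of `pss` starting from `j`. -/
noncomputable def pssClosure (S : List α) (j : ℕ) : Set ℕ :=
  {k | ∃ m, (pss S)^[m] j = k}

open scoped Classical in
/-- Size of the subtree of node `i` in the PSS tree of `S`. -/
noncomputable def subtreeSize (S : List α) (i : ℕ) : ℕ :=
  ((Finset.range (S.length + 1)).filter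
    (fun j => j = i ∨ ∃ m, 0 < m ∧ (pss S)^[m] j = i)).card

open scoped Classical in
/-- `lam S i`: length of the longest Lyndon word starting at position `i` (1-indexed). -/
noncomputable def lam (S : List α) (i : ℕ) : ℕ :=
  Nat.findGreatest (fun ℓ => IsLyndon ((S.drop (i - 1)).take ℓ)) (S.length + 1 - i)

/-!
Put `i = pss j`, `w = S[i..j)` and `D = S_j`, so that `S_i = w D ≺ D`, while maximality of `pss j`
gives `D ≺ u D` for every proper nonempty suffix `u` of `w`. If some such `u` satisfied `u ≺ w`,
then either `u D ≺ w D ≺ D`, which is impossible, or `u` is a prefix of `w = u v`, and cancelling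
`u` from `u v D = w D ≺ D ≺ u D` yields `v D ≺ D` for the proper suffix `v` of `w`, again impossible.
-/

namespace List

theorem lt_of_append_lt_append_left : ∀ {x y z : List α}, x ++ y < x ++ z → y < z
  | [], _, _, h => h
  | _ :: _, _, _, .cons h => lt_of_append_lt_append_left h
  | _ :: _, _, _, .rel h => absurd h (lt_irrefl _)

theorem append_lt_append_right_or_isPrefix {u w : List α} (h : u < w) (z : List α) :
    u ++ z < w ++ z ∨ u <+: w := by
  induction h with
  | nil => exact .inr nil_prefix
  | cons _ ih => exact ih.imp .cons (cons_prefix_cons.2 ⟨rfl, ·⟩)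
  | rel h => exact .inl (.rel h)

end List

theorem isLyndon_of_append_lt_of_le_drop_append {w D : List α} (hwD : w ++ D < D)
    (hsuf : ∀ t, 0 < t → t < w.length → D ≤ w.drop t ++ D) : IsLyndon w := by
  refine ⟨by rintro rfl; exact lt_irrefl D hwD, fun t ht htw => ?_⟩
  set u := w.drop t
  have hulen : u.length = w.length - t := List.length_drop
  have hDu : D < u ++ D := (hsuf t ht htw).lt_of_ne fun h => by
    have := congrArg List.length h
    rw [List.length_append, hulen] at this
    omega
  by_contra hwu
  have huw : u < w := (not_lt.1 hwu).lt_of_ne fun h => by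
    have := congrArg List.length h
    omega
  rcases List.append_lt_append_right_or_isPrefix huw D with huDw | ⟨v, hv⟩
  · exact lt_irrefl _ ((hwD.trans hDu).trans huDw)
  · have hvD : v ++ D < D := List.lt_of_append_lt_append_left <| by
      rw [← List.append_assoc, hv]
      exact hwD.trans hDu
    have hdrop : w.drop u.length = v := by rw [← hv, List.drop_left]
    exact (hsuf u.length (by omega) (by omega)).not_gt (hdrop ▸ hvD)

theorem sfx_of_ne_zero {β : Type*} (S : List β) {k : ℕ} (hk : k ≠ 0) : sfx S k = S.drop (k - 1) :=
  if_neg hk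

theorem drop_sfx {β : Type*} (S : List β) {i : ℕ} (hi : i ≠ 0) (t : ℕ) :
    (sfx S i).drop t = sfx S (i + t) := by
  rw [sfx_of_ne_zero S hi, sfx_of_ne_zero S (by omega), List.drop_drop]
  congr 1
  omega

theorem sfx_eq_take_append_sfx {β : Type*} (S : List β) {i j : ℕ} (hi : i ≠ 0) (hij : i ≤ j) :
    sfx S i = (sfx S i).take (j - i) ++ sfx S j := by
  rw [← Nat.add_sub_cancel' hij, Nat.add_sub_cancel_left, ← drop_sfx S hi, List.take_append_drop]

theorem pss_lt (S : List α) {j : ℕ} (h : pss S j ≠ 0) : pss S j < j := by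
  have : pss S j ≤ j - 1 := Nat.findGreatest_le _
  omega

theorem sfx_pss_lt (S : List α) {j : ℕ} (h : pss S j ≠ 0) : sfx S (pss S j) < sfx S j := by
  exact Nat.findGreatest_of_ne_zero rfl h

theorem sfx_le_sfx_of_pss_lt (S : List α) {j k : ℕ} (hk : pss S j < k) (hkj : k < j) :
    sfx S j ≤ sfx S k :=
  not_lt.1 (Nat.findGreatest_is_greatest hk (by omega))

theorem stmt2_general (S : List α) (i j : ℕ)
    (hpss : pss S j = i) (hi : 0 < i) :
    IsLyndon ((S.drop (i - 1)).take (j - i)) := by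
  subst hpss
  have hi₀ : pss S j ≠ 0 := hi.ne'
  have hsplit := sfx_eq_take_append_sfx S hi₀ (pss_lt S hi₀).le
  rw [← sfx_of_ne_zero S hi₀]
  refine isLyndon_of_append_lt_of_le_drop_append (hsplit ▸ sfx_pss_lt S hi₀) fun t ht htw => ?_
  have htj : pss S j + t < j := by
    simp only [List.length_take] at htw
    omega
  rw [← List.drop_append_of_le_length htw.le, ← hsplit, drop_sfx S hi₀]
  exact sfx_le_sfx_of_pss_lt S (by omega) htj

/-- if `pss j = i > 0` then `S[i..j)` is a Lyndon word. -/
theorem stmt2 (S : List α) (i j : ℕ) (hj1 : 1 ≤ j) (hjn : j ≤ S.length)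
    (hpss : pss S j = i) (hi : 0 < i) :
    IsLyndon ((S.drop (i - 1)).take (j - i)) :=
  stmt2_general S i j hpss hi
end

section
/- For any index i ∈ [1,n], pss(i) is an element of the PSS closure of i−1; more precisely, pss(i) = max{j ∈ P_{i−1} : S_j ≺ S_i}, where P_0 = {0} and P_j = {j} ∪ P_{pss(j)}. -/
variable {α : Type*} [LinearOrder α]

/-!
Follow the PSS chain down from `i - 1`. Any `j` with `pss i < j < i` satisfies `S_i ≺ S_j`: the maximality of
`pss i` rules out `S_j ≺ S_i`, and suffixes of different lengths differ. Then `S_{pss i} ≺ S_j`, so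
`pss i ≤ pss j < j`: the chain never jumps over `pss i`, hence reaches it. Maximality is immediate because
the chain stays below `i`.
-/

omit [LinearOrder α] in
lemma length_sfx (S : List α) {k : ℕ} (hk : 1 ≤ k) : (sfx S k).length = S.length - (k - 1) := by
  rw [sfx, if_neg (by omega), List.length_drop]

omit [LinearOrder α] in
lemma sfx_ne_of_lt {S : List α} {j i : ℕ} (hj : 1 ≤ j) (hji : j < i) (hjS : j ≤ S.length) :
    sfx S j ≠ sfx S i := by
  intro h
  have hlen := congrArg List.length h
  rw [length_sfx S hj, length_sfx S (hj.trans hji.le)] at hlen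
  omega

lemma nil_lex_sfx {S : List α} {i : ℕ} (h1 : 1 ≤ i) (h2 : i ≤ S.length) :
    List.Lex (· < ·) [] (sfx S i) := by
  refine (List.lex_nil_or_eq_nil _).resolve_right fun h => ?_
  have hlen := length_sfx S h1
  rw [h, List.length_nil] at hlen
  omega

lemma pss_le_sub_one (S : List α) (j : ℕ) : pss S j ≤ j - 1 := Nat.findGreatest_le _

lemma sfx_pss_lex {S : List α} {i : ℕ} (h1 : 1 ≤ i) (h2 : i ≤ S.length) :
    List.Lex (· < ·) (sfx S (pss S i)) (sfx S i) := by
  classical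
  exact Nat.findGreatest_spec (P := fun k => List.Lex (· < ·) (sfx S k) (sfx S i))
    (Nat.zero_le _) (nil_lex_sfx h1 h2)

lemma not_sfx_lex_of_pss_lt {S : List α} {i k : ℕ} (hk : pss S i < k) (hki : k ≤ i - 1) :
    ¬ List.Lex (· < ·) (sfx S k) (sfx S i) := by
  classical
  exact Nat.findGreatest_is_greatest hk hki

lemma sfx_lex_of_pss_lt {S : List α} {i k : ℕ} (h2 : i ≤ S.length) (hk : pss S i < k)
    (hki : k < i) : List.Lex (· < ·) (sfx S i) (sfx S k) := by
  rcases trichotomous_of (List.Lex ((· < ·) : α → α → Prop)) (sfx S k) (sfx S i)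
    with h | h | h
  · exact absurd h (not_sfx_lex_of_pss_lt hk (by omega))
  · exact absurd h (sfx_ne_of_lt (by omega) hki (by omega))
  · exact h

lemma pss_le_pss_of_pss_lt {S : List α} {i k : ℕ} (h1 : 1 ≤ i) (h2 : i ≤ S.length)
    (hk : pss S i < k) (hki : k < i) : pss S i ≤ pss S k := by
  classical
  exact Nat.le_findGreatest (by omega)
    (List.lex_trans lt_trans (sfx_pss_lex h1 h2) (sfx_lex_of_pss_lt h2 hk hki))

lemma self_mem_pssClosure (S : List α) (j : ℕ) : j ∈ pssClosure S j := ⟨0, rfl⟩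

lemma mem_pssClosure_of_mem_pss {S : List α} {j k : ℕ} (h : k ∈ pssClosure S (pss S j)) :
    k ∈ pssClosure S j := by
  obtain ⟨m, hm⟩ := h
  exact ⟨m + 1, hm⟩

lemma le_of_mem_pssClosure {S : List α} {j k : ℕ} (h : k ∈ pssClosure S j) : k ≤ j := by
  obtain ⟨m, rfl⟩ := h
  exact Function.iterate_le_id_of_le_id (fun j => (pss_le_sub_one S j).trans (Nat.sub_le j 1)) m j

lemma pss_mem_pssClosure {S : List α} {i : ℕ} (h1 : 1 ≤ i) (h2 : i ≤ S.length) :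
    ∀ j, pss S i ≤ j → j < i → pss S i ∈ pssClosure S j := by
  intro j
  induction j using Nat.strong_induction_on with
  | _ j ih =>
    intro hij hji
    rcases hij.eq_or_lt with rfl | hlt
    · exact self_mem_pssClosure S _
    · have hpss : pss S j < j := (pss_le_sub_one S j).trans_lt (by omega)
      exact mem_pssClosure_of_mem_pss
        (ih _ hpss (pss_le_pss_of_pss_lt h1 h2 hlt hji) (hpss.trans hji))

/-- `pss i` is an element of the PSS closure of `i − 1`; more precisely it is
the greatest element `j` of `P_{i−1}` with `S_j ≺ S_i`. -/
theorem stmt4 (S : List α) (i : ℕ) (h1 : 1 ≤ i) (h2 : i ≤ S.length) :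
    pss S i ∈ pssClosure S (i - 1) ∧
    IsGreatest {j | j ∈ pssClosure S (i - 1) ∧ List.Lex (· < ·) (sfx S j) (sfx S i)}
      (pss S i) := by
  have hmem : pss S i ∈ pssClosure S (i - 1) :=
    pss_mem_pssClosure h1 h2 (i - 1) (pss_le_sub_one S i) (by omega)
  refine ⟨hmem, ⟨hmem, sfx_pss_lex h1 h2⟩, ?_⟩
  rintro j ⟨hj, hlex⟩
  by_contra! hgt
  exact not_sfx_lex_of_pss_lt hgt (le_of_mem_pssClosure hj) hlex
end

section
/- Let μ be a Lyndon word and let a', b' ∈ [1, |μ|] with a' < b'. Then the strings μ_{a'}·μ and μ_{b'}·μ (where μ_x denotes the suffix of μ starting at position x) have a mismatch within their common length, i.e., lcp(μ_{a'}·μ, μ_{b'}·μ) < min(|μ_{a'}·μ|, |μ_{b'}·μ|). -/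
variable {α : Type*} [LinearOrder α]

/-!
If `lcp` reached the common length, the shorter word `μ_{b'}·μ` would be a prefix of
`μ_{a'}·μ`. Cutting the first `|μ_{a'}|` letters off both turns this into `μ_{b'-a'+1}` being a
prefix of `μ`, i.e. a proper nonempty suffix of the Lyndon word `μ` that is also one of its
prefixes. But a Lyndon word is smaller than its proper suffixes and larger than its proper
prefixes.
-/

theorem isPrefix_of_length_le_lcp : ∀ {u v : List α}, v.length ≤ lcp u v → v <+: u
  | _, [], _ => List.nil_prefix
  | [], _ :: _, h => by simp [lcp] at h
  | a :: s, b :: t, h => by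
    by_cases hab : a = b
    · subst hab
      have ht : t.length ≤ lcp s t := by simpa [lcp] using h
      exact (List.prefix_cons_inj a).2 (isPrefix_of_length_le_lcp ht)
    · simp [lcp, hab] at h

theorem List.lex_append_cons {β : Type*} (r : β → β → Prop) (s t : List β) (a : β) :
    List.Lex r s (s ++ a :: t) := by
  simpa using List.Lex.append_left r (List.Lex.nil (a := a) (l := t)) s

theorem IsLyndon.not_drop_isPrefix {μ : List α} (hμ : IsLyndon μ) {i : ℕ} (hi₀ : 0 < i)
    (hi : i < μ.length) : ¬ μ.drop i <+: μ := by
  rintro ⟨w, hw⟩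
  obtain ⟨c, w, rfl⟩ : ∃ c w', w = c :: w' := by
    refine List.exists_cons_of_ne_nil ?_
    rintro rfl
    have hlen := congrArg List.length hw
    simp only [List.append_nil, List.length_drop] at hlen
    omega
  have hsuffix_gt : List.Lex (· < ·) μ (μ.drop i) := hμ.2 i hi₀ hi
  have hprefix_lt : List.Lex (· < ·) (μ.drop i) μ := by
    simpa only [hw] using List.lex_append_cons (· < ·) (μ.drop i) w c
  exact asymm hsuffix_gt hprefix_lt

theorem List.drop_length_sub_drop_append {β : Type*} {l m : List β} {a b : ℕ} (hab : a ≤ b)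
    (hb : b ≤ l.length) : (l.drop b ++ m).drop (l.length - a) = m.drop (b - a) := by
  rw [List.drop_append, List.drop_eq_nil_of_le (by simp; omega), List.nil_append,
    List.length_drop]
  congr 1
  omega

/-- for a Lyndon word `μ` and `1 ≤ a' < b' ≤ |μ|`, the strings
`μ_{a'}·μ` and `μ_{b'}·μ` have a mismatch within their common length. -/
theorem stmt7 (μ : List α) (hμ : IsLyndon μ) (a' b' : ℕ)
    (ha : 1 ≤ a') (hab : a' < b') (hb : b' ≤ μ.length) :
    lcp (μ.drop (a' - 1) ++ μ) (μ.drop (b' - 1) ++ μ) <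
      min (μ.drop (a' - 1) ++ μ).length (μ.drop (b' - 1) ++ μ).length := by
  have hmin : min (μ.drop (a' - 1) ++ μ).length (μ.drop (b' - 1) ++ μ).length =
      (μ.drop (b' - 1) ++ μ).length := by
    simp only [List.length_append, List.length_drop]
    omega
  rw [hmin]
  by_contra! hlcp
  have hprefix := (isPrefix_of_length_le_lcp hlcp).drop (μ.length - (a' - 1))
  rw [List.drop_length_sub_drop_append (by omega) (by omega),
    List.drop_left' List.length_drop, show b' - 1 - (a' - 1) = b' - a' by omega]
    at hprefix
  exact hμ.not_drop_isPrefix (by omega) (by omega) hprefix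
end

section
/- Let μ be a Lyndon word, let W be any string, and let a, b ∈ [0, |μ|) with a ≠ b. Let X = μ_{a+1}·μ·W and Y = μ_{b+1}·μ·W. Then whether X ≺ Y does not depend on W: for any strings W and W', μ_{a+1}·μ·W ≺ μ_{b+1}·μ·W if and only if μ_{a+1}·μ·W' ≺ μ_{b+1}·μ·W'. -/
variable {α : Type*} [LinearOrder α]

/-! A Lyndon word `μ` is unbordered: no proper suffix `μ_{p+1}` is a prefix of `μ`, since
`μ ≺ μ_{p+1}`. Hence neither of `μ_{a+1}·μ` and `μ_{b+1}·μ` is a prefix of the other (shifting the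
shorter one to the start of its copy of `μ` would exhibit a border), so the two words differ at a
position inside both and the comparison is settled before `W` is reached. -/

namespace List

theorem IsPrefix.not_lex {β : Type*} {r : β → β → Prop} [Std.Irrefl r] {s t : List β}
    (h : t <+: s) : ¬ Lex r s t := by
  obtain ⟨u, rfl⟩ := h
  induction t with
  | nil => exact not_lex_nil
  | cons x t ih => rwa [cons_append, lex_cons_iff]

theorem lex_append_append_iff_of_not_isPrefix {β : Type*} {r : β → β → Prop} :
    ∀ {X Y : List β}, ¬ X <+: Y → ¬ Y <+: X → ∀ W V, (Lex r (X ++ W) (Y ++ V) ↔ Lex r X Y)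
  | [], _, hXY, _, _, _ => absurd nil_prefix hXY
  | _ :: _, [], _, hYX, _, _ => absurd nil_prefix hYX
  | x :: X, y :: Y, hXY, hYX, W, V => by
    simp only [cons_append, cons_lex_cons_iff]
    refine or_congr_right (and_congr_right fun hxy => ?_)
    subst hxy
    exact lex_append_append_iff_of_not_isPrefix (fun h => hXY (cons_prefix_cons.2 ⟨rfl, h⟩))
      (fun h => hYX (cons_prefix_cons.2 ⟨rfl, h⟩)) W V

end List

namespace IsLyndon

theorem drop_not_isPrefix {μ : List α} (hμ : IsLyndon μ) {p : ℕ} (hp₀ : 0 < p)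
    (hp : p < μ.length) : ¬ μ.drop p <+: μ :=
  fun h => h.not_lex (hμ.2 p hp₀ hp)

theorem drop_append_not_isPrefix {μ : List α} (hμ : IsLyndon μ) {a b : ℕ} (ha : a < μ.length)
    (hab : a ≠ b) : ¬ μ.drop a ++ μ <+: μ.drop b ++ μ := by
  intro h
  rcases hab.lt_or_gt with hlt | hgt
  · have hlen := h.length_le
    simp only [List.length_append, List.length_drop] at hlen
    omega
  · have hX : (μ.drop a ++ μ).drop (μ.length - b) = μ.drop (a - b) := by
      rw [List.drop_append, List.drop_eq_nil_of_le (by rw [List.length_drop]; omega), List.length_drop,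
        List.nil_append]
      congr 1
      omega
    have hY : (μ.drop b ++ μ).drop (μ.length - b) = μ := by
      rw [List.drop_append, List.drop_eq_nil_of_le (by simp), List.length_drop, Nat.sub_self]
      rfl
    have hshift := h.drop (μ.length - b)
    rw [hX, hY] at hshift
    exact hμ.drop_not_isPrefix (by omega) (by omega) hshift

end IsLyndon

/-- for a Lyndon word `μ` and `a ≠ b` in `[0, |μ|)`, whether
`μ_{a+1}·μ·W ≺ μ_{b+1}·μ·W` does not depend on the appended string `W`. -/
theorem stmt8 (μ : List α) (hμ : IsLyndon μ) (a b : ℕ)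
    (ha : a < μ.length) (hb : b < μ.length) (hab : a ≠ b) (W W' : List α) :
    (List.Lex (· < ·) (μ.drop a ++ μ ++ W) (μ.drop b ++ μ ++ W) ↔
      List.Lex (· < ·) (μ.drop a ++ μ ++ W') (μ.drop b ++ μ ++ W')) := by
  have hab' := hμ.drop_append_not_isPrefix ha hab
  have hba' := hμ.drop_append_not_isPrefix hb hab.symm
  rw [List.lex_append_append_iff_of_not_isPrefix hab' hba',
    List.lex_append_append_iff_of_not_isPrefix hab' hba']
end

section
/- Let μ be a Lyndon word and let x be a position inside an occurrence of μ at position r in a string S, i.e., r < x < r + |μ| and S[r..r+|μ|) = μ, and suppose S_r has |μ| further characters after the occurrence forming another copy of μ (i.e., S[r..r+2|μ|) = μμ). Then S_{r+|μ|} ≺ S_x for all x ∈ (r, r+|μ|). -/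
variable {α : Type*} [LinearOrder α]

/-! Write `S_r = μ μ R`. Then `S_{r+|μ|} = μ R` and, for `r < x < r + |μ|`, `S_x = σ μ R` with `σ`
a proper nonempty suffix of `μ`. Since `μ` is Lyndon, `μ ≺ σ`, and as `σ` is shorter than `μ`
this comparison is decided within `σ`, whatever follows. -/

theorem List.Lex.append_of_length_le {β : Type*} {r : β → β → Prop} {a b : List β}
    (u v : List β) (h : List.Lex r a b) (hlen : b.length ≤ a.length) :
    List.Lex r (a ++ u) (b ++ v) := by
  induction h with
  | nil => simp at hlen
  | cons _ ih => exact List.Lex.cons (ih (by simpa using hlen))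
  | rel h => exact List.Lex.rel h

theorem IsLyndon.lex_append_drop_append {μ : List α} (hμ : IsLyndon μ) {i : ℕ}
    (hi₀ : 0 < i) (hi : i < μ.length) (u v : List α) :
    List.Lex (· < ·) (μ ++ u) (μ.drop i ++ v) :=
  (hμ.2 i hi₀ hi).append_of_length_le u v (by simp)

theorem List.drop_eq_append_of_take_drop_eq {β : Type*} {S w : List β} {k : ℕ}
    (h : (S.drop k).take w.length = w) : S.drop k = w ++ S.drop (k + w.length) := by
  conv_lhs => rw [← List.take_append_drop w.length (S.drop k), h, List.drop_drop]

theorem sfx_add {β : Type*} {S : List β} {r : ℕ} (hr : 1 ≤ r) (k : ℕ) :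
    sfx S (r + k) = (S.drop (r - 1)).drop k := by
  rw [sfx, if_neg (by omega), List.drop_drop]
  congr 1
  omega

theorem stmt11_general (S μ : List α) (hμ : IsLyndon μ) (r : ℕ) (h1 : 1 ≤ r)
    (hocc : (S.drop (r - 1)).take (2 * μ.length) = μ ++ μ) :
    ∀ x, r < x → x < r + μ.length →
      List.Lex (· < ·) (sfx S (r + μ.length)) (sfx S x) := by
  intro x hrx hxr
  have hsquare : S.drop (r - 1) = μ ++ μ ++ S.drop (r - 1 + (μ ++ μ).length) :=
    List.drop_eq_append_of_take_drop_eq (by rwa [List.length_append, ← two_mul])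
  obtain ⟨k, rfl⟩ : ∃ k, x = r + k := ⟨x - r, by omega⟩
  rw [sfx_add h1, sfx_add h1, hsquare, List.append_assoc, List.drop_left,
    List.drop_append_of_le_length (by omega)]
  exact hμ.lex_append_drop_append (by omega) (by omega) _ _

/-- if `S[r..r+2|μ|) = μμ` with `μ` Lyndon, then the suffix starting at the
next repetition boundary `r + |μ|` is smaller than every suffix starting strictly inside
the preceding repetition. -/
theorem stmt11 (S μ : List α) (hμ : IsLyndon μ) (r : ℕ) (h1 : 1 ≤ r)
    (hfit : r - 1 + 2 * μ.length ≤ S.length)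
    (hocc : (S.drop (r - 1)).take (2 * μ.length) = μ ++ μ) :
    ∀ x, r < x → x < r + μ.length →
      List.Lex (· < ·) (sfx S (r + μ.length)) (sfx S x) :=
  stmt11_general S μ hμ r h1 hocc
end

section
/- In a decreasing Lyndon run, μ is not a prefix of S_{pss(r_1)}: with μ = S[r_1..r_2) a Lyndon word, S[r_1..r_3) = μμ, S_{r_1} ≻ S_{r_2}, and p = pss(r_1) > 0, the suffix S_p does not have μ as a prefix. -/
variable {α : Type*} [LinearOrder α]

private theorem lex_append_cancel {a b c : List α}
    (h : List.Lex (· < ·) (c ++ a) (c ++ b)) : List.Lex (· < ·) a b := by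
  induction c with
  | nil => exact h
  | cons x c ih => exact ih (List.lex_cons_iff.mp h)

private theorem lex_append_of_not_prefix {a b : List α}
    (h : List.Lex (· < ·) a b) (hnp : ¬ a <+: b) (x y : List α) :
    List.Lex (· < ·) (a ++ x) (b ++ y) := by
  induction h with
  | nil => exact absurd List.nil_prefix hnp
  | @rel a l₁ b l₂ hab => exact List.Lex.rel hab
  | @cons a l₁ l₂ hl ih =>
      exact List.Lex.cons (ih (fun hp => hnp (List.cons_prefix_cons.mpr ⟨rfl, hp⟩)))

/-- in a decreasing Lyndon run, `μ` is not a prefix of `S_{pss r₁}`. -/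
theorem stmt13 (S μ : List α) (hμ : IsLyndon μ) (r₁ r₂ r₃ : ℕ) (h1 : 1 ≤ r₁)
    (hr2 : r₂ = r₁ + μ.length) (hr3 : r₃ = r₂ + μ.length)
    (hfit : r₁ - 1 + 2 * μ.length ≤ S.length)
    (hocc : (S.drop (r₁ - 1)).take (2 * μ.length) = μ ++ μ)
    (hdec : List.Lex (· < ·) (sfx S r₂) (sfx S r₁))
    (hp : 0 < pss S r₁) :
    ¬ (μ <+: sfx S (pss S r₁)) := by
  classical
  intro hpre
  have hμne : μ ≠ [] := hμ.1
  have hμpos : 0 < μ.length := List.length_pos_iff.mpr hμne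
  have hple : pss S r₁ ≤ r₁ - 1 := Nat.findGreatest_le _
  have hplt : pss S r₁ < r₁ := lt_of_le_of_lt hple (by omega)
  have hPp : List.Lex (· < ·) (sfx S (pss S r₁)) (sfx S r₁) :=
    Nat.findGreatest_of_ne_zero rfl hp.ne'
  set p := pss S r₁ with hpdef
  -- decompose the occurrence
  have hSr1 : S.drop (r₁ - 1) = μ ++ (μ ++ S.drop (r₁ - 1 + 2 * μ.length)) := by
    conv_lhs => rw [← List.take_append_drop (2 * μ.length) (S.drop (r₁ - 1))]
    rw [hocc, List.drop_drop, List.append_assoc]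
  have hsr1 : sfx S r₁ = μ ++ (μ ++ S.drop (r₁ - 1 + 2 * μ.length)) := by
    rw [sfx, if_neg (by omega)]; exact hSr1
  have hsr2 : sfx S r₂ = μ ++ S.drop (r₁ - 1 + 2 * μ.length) := by
    rw [sfx, if_neg (by omega)]
    have h2 : r₂ - 1 = (r₁ - 1) + μ.length := by omega
    rw [h2, ← List.drop_drop, hSr1, List.drop_left]
  -- decompose the prefix at p
  obtain ⟨t, ht⟩ := hpre
  have hsp : sfx S p = μ ++ S.drop (p - 1 + μ.length) := by
    rw [sfx, if_neg hp.ne'] at ht ⊢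
    have : t = (S.drop (p - 1)).drop μ.length := by
      rw [← ht, List.drop_left]
    rw [← ht, this, List.drop_drop]
  have hsq : sfx S (p + μ.length) = S.drop (p - 1 + μ.length) := by
    rw [sfx, if_neg (by omega)]
    congr 1
    omega
  -- S_q ≺ S_{r₂}
  have hmax : ∀ k, pss S r₁ < k → k ≤ r₁ - 1 → ¬ List.Lex (· < ·) (sfx S k) (sfx S r₁) :=
    fun _ hk hkb => Nat.findGreatest_is_greatest hk hkb
  have hq : List.Lex (· < ·) (sfx S (p + μ.length)) (sfx S r₂) := by
    rw [hsq]
    rw [hsp, hsr1, ← hsr2] at hPp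
    exact lex_append_cancel hPp
  have htr : List.Lex (· < ·) (sfx S (p + μ.length)) (sfx S r₁) :=
    List.lex_trans lt_trans hq hdec
  rcases lt_trichotomy (p + μ.length) r₁ with hlt | heq | hgt
  · exact hmax _ (by omega) (by omega) htr
  · rw [heq] at hq
    exact asymm hq hdec
  · -- r₁ < p + μ.length < r₂
    set q := p + μ.length with hqdef
    have htpos : 0 < q - r₁ := by omega
    have htlt : q - r₁ < μ.length := by omega
    have hsq2 : sfx S q = μ.drop (q - r₁) ++ (μ ++ S.drop (r₁ - 1 + 2 * μ.length)) := by
      rw [sfx, if_neg (by omega)]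
      have h3 : q - 1 = (r₁ - 1) + (q - r₁) := by omega
      rw [h3, ← List.drop_drop, hSr1,
        List.drop_append_of_le_length (by omega)]
    have hlyn : List.Lex (· < ·) μ (μ.drop (q - r₁)) := hμ.2 _ htpos htlt
    have hnp : ¬ μ <+: μ.drop (q - r₁) := by
      intro hpf
      have := hpf.length_le
      rw [List.length_drop] at this
      omega
    have hback : List.Lex (· < ·) (sfx S r₂) (sfx S q) := by
      rw [hsr2, hsq2]
      exact lex_append_of_not_prefix hlyn hnp _ _
    rw [hsq] at hback
    rw [hsq] at hq
    exact asymm hq hback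
end

section
/- Uniqueness of the Lyndon factorization: every non-empty string S admits exactly one decomposition S = s_1·s_2·…·s_m into non-empty factors such that every s_i is a Lyndon word and s_1 ⪰ s_2 ⪰ … ⪰ s_m (lexicographically non-increasing). -/
variable {α : Type*} [LinearOrder α]

/-!
Existence: start from the factorization into letters and merge adjacent factors `u < v` as long
as there are any; this terminates, and `u ++ v` is again Lyndon because `u ++ v < v` and every
proper suffix of `u ++ v` is either `v`, a suffix of `v`, or of the form `s ++ v` with `u < s`
and `u` not a prefix of `s`.

Uniqueness: the first factor `v` of a non-increasing Lyndon factorization is its longest Lyndon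
prefix. If a Lyndon prefix `u` were longer, then `v < u`, and the proper suffix of `u` after `v`
would be a prefix of the product of the remaining factors, all `≤ v < u`. Peeling these factors
off one at a time always leaves a proper suffix of `u`, hence a word `> u` that none of them can
cover.
-/

namespace List

theorem append_lt_append_of_lt_of_not_isPrefix {a b : List α} (h : a < b) (hp : ¬ a <+: b)
    (s t : List α) : a ++ s < b ++ t := by
  induction h with
  | nil => exact absurd nil_prefix hp
  | cons _ ih => exact Lex.cons (ih fun hpre => hp (cons_prefix_cons.mpr ⟨rfl, hpre⟩))
  | rel h => exact Lex.rel h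

theorem exists_eq_append_cons_cons_of_not_isChain {β : Type*} {R : β → β → Prop} :
    ∀ {L : List β}, ¬ L.IsChain R → ∃ L₁ a b L₂, L = L₁ ++ a :: b :: L₂ ∧ ¬ R a b
  | [], h => absurd isChain_nil h
  | [a], h => absurd (isChain_singleton a) h
  | a :: b :: L, h => by
    by_cases hab : R a b
    · have hbL : ¬ (b :: L).IsChain R := fun hc => h (isChain_cons_cons.mpr ⟨hab, hc⟩)
      obtain ⟨L₁, x, y, L₂, hL, hxy⟩ := exists_eq_append_cons_cons_of_not_isChain hbL
      exact ⟨a :: L₁, x, y, L₂, by rw [hL]; rfl, hxy⟩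
    · exact ⟨[], a, b, L, rfl, hab⟩

theorem IsPrefix.not_lt {a b : List α} (h : a <+: b) : ¬ b < a := h.le

theorem IsPrefix.lt_of_ne {a b : List α} (h : a <+: b) (hne : a ≠ b) : a < b :=
  lt_of_le_of_ne (le_of_not_gt h.not_lt) hne

end List

theorem IsLyndon.ne_nil {u : List α} (hu : IsLyndon u) : u ≠ [] := hu.1

theorem IsLyndon.lt_drop {u : List α} (hu : IsLyndon u) {k : ℕ} (hk₀ : 0 < k)
    (hk : k < u.length) : u < u.drop k :=
  hu.2 k hk₀ hk

theorem isLyndon_singleton (x : α) : IsLyndon [x] :=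
  ⟨List.cons_ne_nil x [], fun _ _ hlen => by simp at hlen; omega⟩

theorem IsLyndon.append_lt_right {u v : List α} (hu : u ≠ []) (hv : IsLyndon v) (huv : u < v) :
    u ++ v < v := by
  by_cases hp : u <+: v
  · obtain ⟨c, rfl⟩ := hp
    have hc : c ≠ [] := by rintro rfl; simp at huv
    have hlt : u ++ c < c := by
      simpa using hv.lt_drop (k := u.length) (List.length_pos_iff.mpr hu)
        (by simpa using List.length_pos_iff.mpr hc)
    exact List.append_left_lt hlt
  · simpa using List.append_lt_append_of_lt_of_not_isPrefix huv hp v []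

theorem IsLyndon.append {u v : List α} (hu : IsLyndon u) (hv : IsLyndon v) (huv : u < v) :
    IsLyndon (u ++ v) := by
  refine ⟨by simp [hu.ne_nil], fun i hi hlen => ?_⟩
  rw [List.length_append] at hlen
  rcases lt_trichotomy i u.length with h | rfl | h
  · have hnp : ¬ u <+: u.drop i := fun hp => absurd hp.length_le (by simp; omega)
    rw [List.drop_append_of_le_length h.le]
    exact List.append_lt_append_of_lt_of_not_isPrefix (hu.lt_drop hi h) hnp v v
  · simpa using hv.append_lt_right hu.ne_nil huv
  · obtain ⟨j, rfl⟩ := Nat.exists_eq_add_of_lt h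
    rw [List.drop_append, List.drop_of_length_le (by omega), List.nil_append]
    exact (hv.append_lt_right hu.ne_nil huv).trans (hv.lt_drop (by omega) (by omega))

theorem IsLyndon.not_drop_isPrefix_flatten {u : List α} (hu : IsLyndon u) {V : List (List α)}
    (hV : ∀ w ∈ V, w < u) {k : ℕ} (hk₀ : 0 < k) (hk : k < u.length) :
    ¬ u.drop k <+: V.flatten := by
  induction V generalizing k with
  | nil => simpa [List.drop_eq_nil_iff] using hk
  | cons w V ih =>
    intro hpre
    have hw : w < u.drop k := (hV w (.head V)).trans (hu.lt_drop hk₀ hk)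
    rw [List.flatten_cons] at hpre
    rcases le_total (u.drop k).length w.length with hle | hle
    · exact (List.prefix_of_prefix_length_le hpre (List.prefix_append _ _) hle).not_lt hw
    obtain ⟨rest, hrest⟩ := List.prefix_of_prefix_length_le (List.prefix_append _ _) hpre hle
    have hdrop : u.drop (k + w.length) = rest := by
      rw [← List.drop_drop, ← hrest, List.drop_left]
    have hrest_ne : rest ≠ [] := by
      rintro rfl
      exact hw.ne (by simpa using hrest)
    have hlen : k + w.length < u.length := by
      by_contra! h
      exact hrest_ne (hdrop ▸ List.drop_of_length_le h)
    rw [← hrest, List.prefix_append_right_inj, ← hdrop] at hpre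
    exact ih (fun x hx => hV x (.tail w hx)) (by omega) hlen hpre

theorem IsLyndon.length_le_of_isPrefix_flatten {u v : List α} {V : List (List α)}
    (hu : IsLyndon u) (hv : v ≠ []) (hV : (v :: V).IsChain (fun a b => ¬ a < b))
    (hpre : u <+: (v :: V).flatten) : u.length ≤ v.length := by
  by_contra! hlt
  have hvu : v <+: u := List.prefix_of_prefix_length_le (List.prefix_append _ _) hpre hlt.le
  have hlt_u : v < u := hvu.lt_of_ne (by rintro rfl; exact lt_irrefl _ hlt)
  have hle_v : ∀ w ∈ V, w ≤ v :=
    List.pairwise_cons.mp (List.isChain_iff_pairwise.mp (hV.imp fun _ _ => le_of_not_gt)) |>.1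
  obtain ⟨c, rfl⟩ := hvu
  rw [List.flatten_cons, List.prefix_append_right_inj] at hpre
  refine hu.not_drop_isPrefix_flatten (fun w hw => (hle_v w hw).trans_lt hlt_u)
    (k := v.length) (List.length_pos_iff.mpr hv) hlt ?_
  simpa using hpre

def IsLyndonFactorization (S : List α) (L : List (List α)) : Prop :=
  L.flatten = S ∧ (∀ w ∈ L, IsLyndon w) ∧ L.IsChain (fun a b => ¬ a < b)

theorem exists_isLyndonFactorization_flatten (L : List (List α)) (hL : ∀ w ∈ L, IsLyndon w) :
    ∃ L', IsLyndonFactorization L.flatten L' := by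
  by_cases hc : L.IsChain (fun a b => ¬ a < b)
  · exact ⟨L, rfl, hL, hc⟩
  obtain ⟨L₁, u, v, L₂, rfl, huv⟩ := List.exists_eq_append_cons_cons_of_not_isChain hc
  have hmerged : ∀ w ∈ L₁ ++ (u ++ v) :: L₂, IsLyndon w := by
    simp only [List.mem_append, List.mem_cons] at hL ⊢
    rintro w (hw | rfl | hw)
    · exact hL w (.inl hw)
    · exact (hL u (.inr (.inl rfl))).append (hL v (.inr (.inr (.inl rfl)))) (not_not.mp huv)
    · exact hL w (.inr (.inr (.inr hw)))
  simpa using exists_isLyndonFactorization_flatten _ hmerged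
termination_by L.length
decreasing_by subst_vars; simp

theorem exists_isLyndonFactorization (S : List α) : ∃ L, IsLyndonFactorization S L := by
  have hS : (S.map ([·])).flatten = S := List.flatMap_singleton' S
  simpa only [hS] using
    exists_isLyndonFactorization_flatten (S.map ([·])) (by simp [isLyndon_singleton])

theorem IsLyndonFactorization.eq_nil {L : List (List α)} (h : IsLyndonFactorization [] L) :
    L = [] := by
  cases L with
  | nil => rfl
  | cons w L => exact absurd (List.flatten_eq_nil_iff.mp h.1 w (.head L)) (h.2.1 w (.head L)).ne_nil

theorem IsLyndonFactorization.unique {S : List α} {L₁ L₂ : List (List α)}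
    (h₁ : IsLyndonFactorization S L₁) (h₂ : IsLyndonFactorization S L₂) : L₁ = L₂ := by
  induction L₁ generalizing S L₂ with
  | nil =>
    obtain rfl : S = [] := h₁.1.symm
    exact h₂.eq_nil.symm
  | cons u U ih =>
    cases L₂ with
    | nil =>
      obtain rfl : S = [] := h₂.1.symm
      exact h₁.eq_nil
    | cons v V =>
      obtain ⟨hf₁, hly₁, hc₁⟩ := h₁
      obtain ⟨hf₂, hly₂, hc₂⟩ := h₂
      have hu : u <+: S := hf₁ ▸ List.prefix_append u U.flatten
      have hv : v <+: S := hf₂ ▸ List.prefix_append v V.flatten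
      have huv : u.length ≤ v.length := (hly₁ u (.head U)).length_le_of_isPrefix_flatten
        (hly₂ v (.head V)).ne_nil hc₂ (hf₂ ▸ hu)
      have hvu : v.length ≤ u.length := (hly₂ v (.head V)).length_le_of_isPrefix_flatten
        (hly₁ u (.head U)).ne_nil hc₁ (hf₁ ▸ hv)
      obtain rfl : u = v :=
        (List.prefix_of_prefix_length_le hu hv huv).eq_of_length (le_antisymm huv hvu)
      rw [ih ⟨rfl, fun w hw => hly₁ w (.tail u hw), hc₁.tail⟩
        ⟨List.append_cancel_left (hf₂.trans hf₁.symm), fun w hw => hly₂ w (.tail u hw), hc₂.tail⟩]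

theorem stmt15_general (S : List α) :
    ∃! L : List (List α),
      L.flatten = S ∧ (∀ w ∈ L, IsLyndon w) ∧
        L.Chain' (fun a b => ¬ List.Lex (· < ·) a b) := by
  obtain ⟨L, hL⟩ := exists_isLyndonFactorization S
  exact ⟨L, hL, fun _ hL' => IsLyndonFactorization.unique hL' hL⟩

/-- Chen–Fox–Lyndon: every non-empty string has a unique factorization into
a lexicographically non-increasing sequence of Lyndon words. -/
theorem stmt15 (S : List α) (hS : S ≠ []) :
    ∃! L : List (List α),
      L.flatten = S ∧ (∀ w ∈ L, IsLyndon w) ∧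
        L.Chain' (fun a b => ¬ List.Lex (· < ·) a b) :=
  stmt15_general S
end

section
/- Lyndon factorization of an extended Lyndon run: let μ be a Lyndon word, t ≥ 2, suf(μ) a proper suffix of μ, pre(μ) a proper prefix of μ, and let x_1,…,x_{k_1} be the Lyndon factorization of suf(μ) and y_1,…,y_{k_2} that of pre(μ). Then x_1,…,x_{k_1}, μ, μ, …, μ (t times), y_1,…,y_{k_2} is the Lyndon factorization of S = suf(μ)·μ^t·pre(μ). -/
variable {α : Type*} [LinearOrder α]

private lemma lex_asymm' {a b : List α} (h : List.Lex (· < ·) a b) :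
    ¬ List.Lex (· < ·) b a := by
  intro h2
  have hi : IsIrrefl (List α) (List.Lex (· < ·)) := inferInstance
  have ht' : IsTrans (List α) (List.Lex (· < ·)) := ⟨fun _ _ _ h1 h2 => List.lt_trans h1 h2⟩
  exact hi.irrefl a (ht'.trans _ _ _ h h2)

private lemma lex_of_strict_prefix {a b : List α} (h : a <+: b) (h2 : a.length < b.length) :
    List.Lex (· < ·) a b := by
  obtain ⟨c, rfl⟩ := h
  have hc : c ≠ [] := by rintro rfl; simp at h2
  clear h2
  induction a with
  | nil => cases c with
    | nil => exact absurd rfl hc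
    | cons h t => exact List.Lex.nil
  | cons h t ih => exact List.Lex.cons ih

/-- the Lyndon factorization of an extended Lyndon run
`suf(μ)·μ^t·pre(μ)` is the factorization of `suf(μ)`, followed by `t` copies of `μ`,
followed by the factorization of `pre(μ)`. -/
theorem stmt16 (μ sufμ preμ : List α) (hμ : IsLyndon μ) (t : ℕ) (ht : 2 ≤ t)
    (hsuf : sufμ <:+ μ) (hsuflt : sufμ.length < μ.length)
    (hpre : preμ <+: μ) (hprelt : preμ.length < μ.length)
    (xs ys : List (List α))
    (hxs : xs.flatten = sufμ ∧ (∀ w ∈ xs, IsLyndon w) ∧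
      xs.Chain' (fun a b => ¬ List.Lex (· < ·) a b))
    (hys : ys.flatten = preμ ∧ (∀ w ∈ ys, IsLyndon w) ∧
      ys.Chain' (fun a b => ¬ List.Lex (· < ·) a b)) :
    (xs ++ List.replicate t μ ++ ys).flatten = sufμ ++ (List.replicate t μ).flatten ++ preμ ∧
    (∀ w ∈ xs ++ List.replicate t μ ++ ys, IsLyndon w) ∧
    (xs ++ List.replicate t μ ++ ys).Chain' (fun a b => ¬ List.Lex (· < ·) a b) := by
  obtain ⟨hxf, hxl, hxc⟩ := hxs
  obtain ⟨hyf, hyl, hyc⟩ := hys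
  have hμne := hμ.1
  have hμlen : 0 < μ.length := List.length_pos_iff.2 hμne
  -- any nonempty suffix of sufμ is ≻ μ
  have hsufkey : ∀ w : List α, w ≠ [] → w <:+ sufμ → ¬ List.Lex (· < ·) w μ := by
    intro w hw hws
    have hwμ : w <:+ μ := hws.trans hsuf
    obtain ⟨u, hu⟩ := hwμ
    have hulen : 0 < u.length := by
      by_contra h
      have : u = [] := by simpa using Nat.le_zero.1 (Nat.le_of_not_lt h)
      subst this
      simp only [List.nil_append] at hu
      subst hu
      exact absurd (hws.length_le.trans_lt hsuflt) (lt_irrefl _)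
    have hlt : u.length < μ.length := by
      have := congrArg List.length hu
      simp at this
      have := List.length_pos_iff.2 hw
      omega
    have hdrop : μ.drop u.length = w := by
      rw [← hu, List.drop_left]
    have := hμ.2 u.length hulen hlt
    rw [hdrop] at this
    exact lex_asymm' this
  -- any nonempty prefix of preμ is ≺ μ
  have hprekey : ∀ w : List α, w <+: preμ → ¬ List.Lex (· < ·) μ w := by
    intro w hws
    have hwμ : w <+: μ := hws.trans hpre
    have hwlen : w.length < μ.length := hws.length_le.trans_lt hprelt
    exact lex_asymm' (lex_of_strict_prefix hwμ hwlen)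
  refine ⟨by simp [hxf, hyf], ?_, ?_⟩
  · intro w hw
    simp only [List.mem_append, List.mem_replicate] at hw
    rcases hw with (hw | hw) | hw
    · exact hxl w hw
    · rw [hw.2]; exact hμ
    · exact hyl w hw
  · rw [List.Chain', List.isChain_append, List.isChain_append]
    refine ⟨⟨hxc, ?_, ?_⟩, ?_, ?_⟩
    · -- chain' on replicate
      apply List.isChain_replicate_of_rel
      intro h
      have hi : IsIrrefl (List α) (List.Lex (· < ·)) := inferInstance
      exact hi.irrefl μ h
    · -- junction xs → μ
      intro x hx y hy
      have hyμ : y = μ := by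
        have ht0 : t ≠ 0 := by omega
        rcases t with _ | t
        · omega
        · simp [List.replicate_succ] at hy; exact hy.symm
      subst hyμ
      have hxmem : x ∈ xs := List.mem_of_mem_getLast? hx
      have hxlyn := hxl x hxmem
      have hxsuf : x <:+ sufμ := by
        rw [← hxf]
        rcases List.eq_nil_or_concat xs with rfl | ⟨ini, lst, rfl⟩
        · simp at hx
        · have hlast : (ini.concat lst).getLast? = some lst := by simp
          rw [hlast] at hx
          have : lst = x := Option.some_injective _ hx
          subst this
          exact ⟨ini.flatten, by simp [List.concat_eq_append]⟩
      exact hsufkey x hxlyn.1 hxsuf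
    · exact hyc
    · -- junction (xs ++ replicate) → ys
      intro x hx y hy
      have hymem : y ∈ ys := List.mem_of_mem_head? hy
      have hypre : y <+: preμ := by
        rw [← hyf]
        cases ys with
        | nil => simp at hy
        | cons a l =>
          have : a = y := Option.some_injective _ hy
          subst this
          exact ⟨l.flatten, by simp⟩
      have hxμ : x = μ := by
        have : (xs ++ List.replicate t μ).getLast? = some μ := by
          rw [List.getLast?_append_of_ne_nil, List.getLast?_replicate]
          · simp; omega
          · simp; omega
        rw [this] at hx
        exact (Option.some_injective _ hx).symm
      subst hxμ
      exact hprekey y hypre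
end
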